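/- Let k ≥ 2 be an integer and q = p^r with p prime and r ≥ 1. The sequence {S_{F_q}(R_{2,3,…,k}(n))}_{n≥k} of exponential sums over F_q of the monomial rotation symmetric polynomials R_{2,3,…,k}(n) satisfies a homogeneous linear recurrence with integer coefficients: there exist an integer d ≥ 1 and integers c_0, …, c_{d−1} such that S_{F_q}(R_{2,3,…,k}(n)) = c_{d−1}·S_{F_q}(R_{2,3,…,k}(n−1)) + ⋯ + c_0·S_{F_q}(R_{2,3,…,k}(n−d)) for all n ≥ k + d. -/

import Mathlib

open Finset

/-- The exponential sum over `F_q` of a function `G : F_qⁿ → F_q`: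
`S_{F_q}(G) = ∑_{x ∈ F_qⁿ} e^{(2πi/p)·Tr_{F_q/F_p}(G(x))}`. -/
noncomputable def expSumGF (p : ℕ) (F : Type) [Field F] [Fintype F] [Algebra (ZMod p) F]
    (n : ℕ) (G : (Fin n → F) → F) : ℂ :=
  ∑ x : Fin n → F,
    Complex.exp (2 * Real.pi * Complex.I * ((Algebra.trace (ZMod p) F (G x)).val : ℂ) / p)

/-- Extension of a vector `x ∈ F_qⁿ` to a function on `ℕ` (index `i` corresponds
to the variable `X_{i+1}`; out-of-range indices give `0`). -/
def extVar {F : Type} [Zero F] {n : ℕ} (x : Fin n → F) : ℕ → F :=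
  fun i => if h : i < n then x ⟨i, h⟩ else 0

/-- The monomial rotation symmetric polynomial
`R_{2,3,…,k}(n) = ∑_{i=1}^{n} X_i X_{i+1} ⋯ X_{i+k−1}` with cyclic indices mod `n`. -/
def rotMonomial {F : Type} [CommRing F] (k n : ℕ) (x : Fin n → F) : F :=
  ∑ i ∈ Finset.range n, ∏ l ∈ Finset.range k, extVar x ((i + l) % n)

attribute [local instance] Classical.propDecidable

def snocE (n : ℕ) (F : Type) : ((Fin n → F) × F) ≃ (Fin (n + 1) → F) where
  toFun q := Fin.snoc q.1 q.2
  invFun y := (fun i => y i.castSucc, y (Fin.last n))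
  left_inv q := by
    refine Prod.ext ?_ ?_
    · funext i; exact Fin.snoc_castSucc (α := fun _ => F) q.2 q.1 i
    · exact Fin.snoc_last (α := fun _ => F) q.2 q.1
  right_inv y := Fin.snoc_init_self y

noncomputable section AuxGF

variable (p : ℕ) (F : Type) [Field F] [Fintype F] [Algebra (ZMod p) F]

def psiGF (t : F) : ℂ :=
  Complex.exp (2 * Real.pi * Complex.I * ((Algebra.trace (ZMod p) F t).val : ℂ) / p)

omit [Fintype F] in
lemma psiGF_zero : psiGF p F 0 = 1 := by
  simp [psiGF]

lemma exp_mod_eq (u : ℕ) [NeZero p] :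
    Complex.exp (2 * Real.pi * Complex.I * ((u % p : ℕ) : ℂ) / p)
      = Complex.exp (2 * Real.pi * Complex.I * (u : ℂ) / p) := by
  have hp : (p : ℂ) ≠ 0 := Nat.cast_ne_zero.mpr (NeZero.ne p)
  conv_rhs => rw [← Nat.mod_add_div u p]
  push_cast
  rw [show 2 * (Real.pi:ℂ) * Complex.I * ((u % p : ℕ) + (p:ℂ) * ((u / p : ℕ))) / p
      = 2 * (Real.pi:ℂ) * Complex.I * ((u % p : ℕ)) / p
        + ((u / p : ℕ) : ℂ) * (2 * (Real.pi:ℂ) * Complex.I) by field_simp]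
  rw [Complex.exp_add]
  rw [show (((u / p : ℕ) : ℂ)) = (((u / p : ℕ) : ℤ) : ℂ) by norm_cast]
  rw [Complex.exp_int_mul_two_pi_mul_I, mul_one]

omit [Fintype F] in
lemma psiGF_add [NeZero p] (s t : F) : psiGF p F (s + t) = psiGF p F s * psiGF p F t := by
  set a := Algebra.trace (ZMod p) F s
  set b := Algebra.trace (ZMod p) F t
  have htr : Algebra.trace (ZMod p) F (s + t) = a + b := map_add _ _ _
  rw [psiGF, psiGF, psiGF, htr, ← Complex.exp_add, ZMod.val_add, exp_mod_eq]
  congr 1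
  push_cast
  ring

def strmGF (m n : ℕ) (a : Fin m → F) (x : Fin n → F) : ℕ → F :=
  fun t => if h : t < m then a ⟨t, h⟩ else if h2 : t - m < n then x ⟨t - m, h2⟩ else 0

omit [Fintype F] in
lemma strmGF_snoc_lt (m n : ℕ) (a : Fin m → F) (x : Fin n → F) (v : F) {t : ℕ} (ht : t < n + m) :
    strmGF F m (n + 1) a (Fin.snoc x v) t = strmGF F m n a x t := by
  unfold strmGF
  by_cases h : t < m
  · simp [h]
  · have h2 : t - m < n := by omega
    have h3 : t - m < n + 1 := by omega
    simp only [dif_neg h, dif_pos h2, dif_pos h3]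
    have he : (⟨t - m, h3⟩ : Fin (n + 1)) = Fin.castSucc ⟨t - m, h2⟩ := rfl
    rw [he]
    exact Fin.snoc_castSucc (α := fun _ => F) v x ⟨t - m, h2⟩

omit [Fintype F] in
lemma strmGF_snoc_last (m n : ℕ) (a : Fin m → F) (x : Fin n → F) (v : F) :
    strmGF F m (n + 1) a (Fin.snoc x v) (n + m) = v := by
  unfold strmGF
  have h : ¬ (n + m < m) := by omega
  have h2 : n + m - m < n + 1 := by omega
  simp only [dif_neg h, dif_pos h2]
  have he : (⟨n + m - m, h2⟩ : Fin (n + 1)) = Fin.last n := by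
    apply Fin.ext; simp
  rw [he]
  exact Fin.snoc_last (α := fun _ => F) v x

def tmatGF (m : ℕ) : Matrix (Fin m → F) (Fin m → F) ℂ :=
  Matrix.of fun a b =>
    if ∀ (j : ℕ) (h : j + 1 < m), b ⟨j, Nat.lt_of_succ_lt h⟩ = a ⟨j + 1, h⟩ then
      psiGF p F (extVar a 0 * ∏ j, b j)
    else 0

lemma tmatGF_apply_of (m : ℕ) (hm : 0 < m) (c b : Fin m → F)
    (h : ∀ (j : ℕ) (hj : j + 1 < m), b ⟨j, Nat.lt_of_succ_lt hj⟩ = c ⟨j + 1, hj⟩) :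
    tmatGF p F m c b = psiGF p F (c ⟨0, hm⟩ * ∏ j, b j) := by
  unfold tmatGF
  rw [Matrix.of_apply, if_pos h]
  congr 2
  simp [extVar, hm]

lemma tmatGF_apply_not (m : ℕ) (c b : Fin m → F)
    (h : ¬ ∀ (j : ℕ) (hj : j + 1 < m), b ⟨j, Nat.lt_of_succ_lt hj⟩ = c ⟨j + 1, hj⟩) :
    tmatGF p F m c b = 0 := by
  unfold tmatGF
  rw [Matrix.of_apply, if_neg h]

theorem tmatGF_pow_apply [NeZero p] (m : ℕ) (hm : 1 ≤ m) (n : ℕ) (a b : Fin m → F) :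
    (tmatGF p F m ^ n) a b =
      ∑ x : Fin n → F,
        if ∀ j : Fin m, b j = strmGF F m n a x (n + j.val) then
          psiGF p F (∑ i ∈ Finset.range n, ∏ l ∈ Finset.range (m + 1), strmGF F m n a x (i + l))
        else 0 := by
  induction n generalizing b with
  | zero =>
    rw [pow_zero, Matrix.one_apply, Fintype.sum_unique]
    have hc : (∀ j : Fin m, b j = strmGF F m 0 a default ((0 : ℕ) + j.val)) ↔ a = b := by
      constructor
      · intro h
        funext j
        have := h j
        simp only [Nat.zero_add, strmGF, j.isLt, dif_pos, Fin.eta] at this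
        exact this.symm
      · intro h j
        subst h
        simp [strmGF, j.isLt]
    by_cases h : a = b
    · rw [if_pos h, if_pos (hc.mpr h)]
      simp [psiGF_zero]
    · rw [if_neg h, if_neg (fun hh => h (hc.mp hh))]
  | succ n ih =>
    have hm0 : 0 < m := hm
    rw [pow_succ, Matrix.mul_apply]
    have step1 : ∀ c : Fin m → F,
        (tmatGF p F m ^ n) a c * tmatGF p F m c b
          = ∑ x : Fin n → F,
              if c = (fun j : Fin m => strmGF F m n a x (n + j.val)) then
                psiGF p F (∑ i ∈ Finset.range n, ∏ l ∈ Finset.range (m + 1),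
                    strmGF F m n a x (i + l)) * tmatGF p F m c b
              else 0 := by
      intro c
      rw [ih c, Finset.sum_mul]
      refine Finset.sum_congr rfl fun x _ => ?_
      by_cases h : ∀ j : Fin m, c j = strmGF F m n a x (n + j.val)
      · rw [if_pos h, if_pos (funext h)]
      · rw [if_neg h, if_neg fun hc => h fun j => congrFun hc j, zero_mul]
    rw [Finset.sum_congr rfl fun c _ => step1 c, Finset.sum_comm]
    simp only [Finset.sum_ite_eq', Finset.mem_univ, if_true]
    rw [← Equiv.sum_comp (snocE n F)]
    rw [Fintype.sum_prod_type]
    have hE : ∀ (x : Fin n → F) (v : F), snocE n F (x, v) = Fin.snoc x v := fun _ _ => rfl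
    simp only [hE]
    refine Finset.sum_congr rfl fun x _ => ?_
    -- pointwise in x
    have hweight : ∀ v : F,
        (∀ j : Fin m, b j = strmGF F m (n + 1) a (Fin.snoc x v) (n + 1 + j.val)) →
        ∑ i ∈ Finset.range (n + 1), ∏ l ∈ Finset.range (m + 1),
            strmGF F m (n + 1) a (Fin.snoc x v) (i + l)
          = (∑ i ∈ Finset.range n, ∏ l ∈ Finset.range (m + 1), strmGF F m n a x (i + l))
              + strmGF F m n a x n * ∏ j, b j := by
      intro v hc
      rw [Finset.sum_range_succ]
      congr 1
      · refine Finset.sum_congr rfl fun i hi => Finset.prod_congr rfl fun l hl => ?_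
        have hi' := Finset.mem_range.mp hi
        have hl' := Finset.mem_range.mp hl
        exact strmGF_snoc_lt F m n a x v (by omega)
      · rw [Finset.prod_range_succ']
        have h0 : strmGF F m (n + 1) a (Fin.snoc x v) (n + 0) = strmGF F m n a x n := by
          have h1 := strmGF_snoc_lt F m n a x v (t := n + 0) (by omega)
          simpa using h1
        rw [h0]
        rw [← Fin.prod_univ_eq_prod_range
          (fun l => strmGF F m (n + 1) a (Fin.snoc x v) (n + (l + 1))) m]
        rw [Finset.prod_congr rfl fun (j : Fin m) _ => show
            strmGF F m (n + 1) a (Fin.snoc x v) (n + ((j : ℕ) + 1)) = b j from by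
          rw [show n + ((j : ℕ) + 1) = n + 1 + (j : ℕ) by omega]
          exact (hc j).symm]
        exact mul_comm _ _
    by_cases hH1 : ∀ (j : ℕ) (hj : j + 1 < m),
        b ⟨j, Nat.lt_of_succ_lt hj⟩ = strmGF F m n a x (n + (j + 1))
    · -- condition characterization
      have hmlt : m - 1 < m := by omega
      have hcond : ∀ v : F,
          (∀ j : Fin m, b j = strmGF F m (n + 1) a (Fin.snoc x v) (n + 1 + j.val))
            ↔ v = b ⟨m - 1, hmlt⟩ := by
        intro v
        constructor
        · intro h
          have h2 := h ⟨m - 1, hmlt⟩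
          rw [show n + 1 + ((⟨m - 1, hmlt⟩ : Fin m) : ℕ) = n + m from by simp; omega] at h2
          rw [strmGF_snoc_last] at h2
          exact h2.symm
        · intro hv j
          by_cases hj : (j : ℕ) + 1 < m
          · have h3 := hH1 j hj
            rw [Fin.eta] at h3
            rw [show n + 1 + (j : ℕ) = n + ((j : ℕ) + 1) by omega]
            rw [strmGF_snoc_lt F m n a x v (by omega)]
            exact h3
          · have hj' : (j : ℕ) = m - 1 := by omega
            have hje : j = ⟨m - 1, hmlt⟩ := Fin.ext hj'
            rw [show n + 1 + (j : ℕ) = n + m by omega, strmGF_snoc_last, hje, hv]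
      have hpt : ∀ v : F,
          (if (∀ j : Fin m, b j = strmGF F m (n + 1) a (Fin.snoc x v) (n + 1 + j.val)) then
            psiGF p F (∑ i ∈ Finset.range (n + 1), ∏ l ∈ Finset.range (m + 1),
              strmGF F m (n + 1) a (Fin.snoc x v) (i + l))
          else 0)
          = (if v = b ⟨m - 1, hmlt⟩ then
              psiGF p F (∑ i ∈ Finset.range n, ∏ l ∈ Finset.range (m + 1),
                strmGF F m n a x (i + l)) * psiGF p F (strmGF F m n a x n * ∏ j, b j)
            else 0) := by
        intro v
        by_cases hv : v = b ⟨m - 1, hmlt⟩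
        · rw [if_pos hv, if_pos ((hcond v).mpr hv), hweight v ((hcond v).mpr hv), psiGF_add]
        · rw [if_neg hv, if_neg (fun hcc => hv ((hcond v).mp hcc))]
      rw [Finset.sum_congr rfl fun v _ => hpt v, Finset.sum_ite_eq', if_pos (Finset.mem_univ _)]
      rw [tmatGF_apply_of p F m hm0 _ b (fun j hj => hH1 j hj)]
      simp
    · -- both sides vanish
      rw [tmatGF_apply_not p F m _ b (fun hc => hH1 fun j hj => hc j hj), mul_zero]
      symm
      refine Finset.sum_eq_zero fun v _ => ?_
      rw [if_neg]
      intro hc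
      refine hH1 fun j hj => ?_
      have h3 := hc ⟨j, Nat.lt_of_succ_lt hj⟩
      rw [show n + 1 + ((⟨j, Nat.lt_of_succ_lt hj⟩ : Fin m) : ℕ) = n + (j + 1) from by simp; omega,
        strmGF_snoc_lt F m n a x v (by simp; omega)] at h3
      exact h3

lemma expSumGF_eq_sum_psiGF (n : ℕ) (G : (Fin n → F) → F) :
    expSumGF p F n G = ∑ x : Fin n → F, psiGF p F (G x) := rfl

theorem trace_tmatGF [NeZero p] (m n : ℕ) (hm : 1 ≤ m) (hmn : m ≤ n) :
    Matrix.trace (tmatGF p F m ^ n) = expSumGF p F n (rotMonomial (m + 1) n) := by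
  have hn0 : 0 < n := by omega
  haveI : NeZero n := ⟨by omega⟩
  -- the boundary window determined by x
  set A : (Fin n → F) → (Fin m → F) :=
    fun x j => x ⟨n + (j : ℕ) - m, by have := j.isLt; omega⟩ with hA
  have hstrm_top : ∀ (a : Fin m → F) (x : Fin n → F) (j : Fin m),
      strmGF F m n a x (n + (j : ℕ)) = A x j := by
    intro a x j
    unfold strmGF
    have h1 : ¬ (n + (j : ℕ) < m) := by have := j.isLt; omega
    have h2 : n + (j : ℕ) - m < n := by have := j.isLt; omega
    simp only [dif_neg h1, dif_pos h2, hA]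
  rw [Matrix.trace]
  simp only [Matrix.diag]
  rw [Finset.sum_congr rfl fun a (_ : a ∈ univ) => tmatGF_pow_apply p F m hm n a a]
  have hpt : ∀ (a : Fin m → F) (x : Fin n → F),
      (if ∀ j : Fin m, a j = strmGF F m n a x (n + (j : ℕ)) then
        psiGF p F (∑ i ∈ Finset.range n, ∏ l ∈ Finset.range (m + 1), strmGF F m n a x (i + l))
      else 0)
      = (if a = A x then
          psiGF p F (∑ i ∈ Finset.range n, ∏ l ∈ Finset.range (m + 1), strmGF F m n a x (i + l))
        else 0) := by
    intro a x
    by_cases h : a = A x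
    · rw [if_pos h, if_pos fun j => by rw [hstrm_top a x j, ← h]]
    · rw [if_neg h, if_neg fun hc => h (funext fun j => by rw [hc j, hstrm_top a x j])]
  rw [Finset.sum_congr rfl fun a (_ : a ∈ univ) =>
    Finset.sum_congr rfl fun x (_ : x ∈ univ) => hpt a x]
  rw [Finset.sum_comm]
  simp only [Finset.sum_ite_eq', Finset.mem_univ, if_true]
  -- now: ∑ x, ψ (T (A x) x)
  set z : (Fin n → F) → (Fin n → F) := fun x t => strmGF F m n (A x) x (t : ℕ) with hz
  have hwrap : ∀ (x : Fin n → F) (i l : ℕ), i < n → l < m + 1 →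
      strmGF F m n (A x) x (i + l) = extVar (z x) ((i + l) % n) := by
    intro x i l hi hl
    have hmod : (i + l) % n < n := Nat.mod_lt _ hn0
    have hext : extVar (z x) ((i + l) % n) = strmGF F m n (A x) x ((i + l) % n) := by
      unfold extVar
      rw [dif_pos hmod]
    rw [hext]
    by_cases hin : i + l < n
    · rw [Nat.mod_eq_of_lt hin]
    · have hge : n ≤ i + l := by omega
      have hsub : (i + l) % n = i + l - n := by
        rw [Nat.mod_eq_sub_mod hge, Nat.mod_eq_of_lt (by omega)]
      rw [hsub]
      -- both sides are x ⟨i + l - m, _⟩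
      unfold strmGF
      have e1 : ¬ (i + l < m) := by omega
      have e2 : i + l - m < n := by omega
      have e3 : i + l - n < m := by omega
      rw [dif_neg e1, dif_pos e2, dif_pos e3]
      simp only [hA]
      exact congrArg x (Fin.ext (by simp; omega))
  have hT : ∀ x : Fin n → F,
      (∑ i ∈ Finset.range n, ∏ l ∈ Finset.range (m + 1), strmGF F m n (A x) x (i + l))
        = rotMonomial (m + 1) n (z x) := by
    intro x
    unfold rotMonomial
    refine Finset.sum_congr rfl fun i hi => Finset.prod_congr rfl fun l hl => ?_
    exact hwrap x i l (Finset.mem_range.mp hi) (Finset.mem_range.mp hl)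
  rw [Finset.sum_congr rfl fun x (_ : x ∈ univ) => congrArg (psiGF p F) (hT x)]
  -- reindex by rotation
  set c : Fin n := ⟨n - m, by omega⟩ with hc
  have hzx : ∀ x : Fin n → F, z x = fun t => x (t + c) := by
    intro x
    funext t
    simp only [hz]
    unfold strmGF
    by_cases h : (t : ℕ) < m
    · rw [dif_pos h]
      simp only [hA]
      refine congrArg x (Fin.ext ?_)
      rw [Fin.add_def]
      simp only [hc]
      rw [Nat.mod_eq_of_lt (by omega)]
      omega
    · have h2 : (t : ℕ) - m < n := by have := t.isLt; omega
      rw [dif_neg h, dif_pos h2]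
      refine congrArg x (Fin.ext ?_)
      rw [Fin.add_def]
      simp only [hc]
      have := t.isLt
      rw [Nat.mod_eq_sub_mod (by omega), Nat.mod_eq_of_lt (by omega)]
      omega
  rw [Finset.sum_congr rfl fun x (_ : x ∈ univ) =>
    congrArg (fun y => psiGF p F (rotMonomial (m + 1) n y)) (hzx x)]
  rw [expSumGF_eq_sum_psiGF]
  exact Equiv.sum_comp (Equiv.arrowCongr (Equiv.addRight c).symm (Equiv.refl F))
    (fun y => psiGF p F (rotMonomial (m + 1) n y))

end AuxGF

/-- Let `k ≥ 2` and `q = p^r` with `p` prime, `r ≥ 1`.  The sequence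
`{S_{F_q}(R_{2,3,…,k}(n))}` satisfies a homogeneous linear recurrence with integer
coefficients: there are `d ≥ 1` and integers `c₀, …, c_{d−1}` with
`S_{F_q}(R_{2,…,k}(n)) = c_{d−1} S_{F_q}(R_{2,…,k}(n−1)) + ⋯ + c₀ S_{F_q}(R_{2,…,k}(n−d))`
for all `n ≥ k + d`. -/
theorem rotation_expSum_linear_recurrence_GF (p r : ℕ) (hp : p.Prime) (hr : 1 ≤ r)
    {F : Type} [Field F] [Fintype F] [Algebra (ZMod p) F] (hq : Fintype.card F = p ^ r)
    (k : ℕ) (hk : 2 ≤ k) :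
    ∃ d : ℕ, 1 ≤ d ∧ ∃ c : ℕ → ℤ, ∀ n : ℕ, k + d ≤ n →
      expSumGF p F n (rotMonomial k n) =
        ∑ i ∈ Finset.range d, (c i : ℂ) * expSumGF p F (n - d + i) (rotMonomial k (n - d + i)) := by
  haveI : NeZero p := ⟨hp.ne_zero⟩
  set m := k - 1 with hmdef
  have hm : 1 ≤ m := by omega
  have hk1 : k = m + 1 := by omega
  set ζ : ℂ := Complex.exp (2 * Real.pi * Complex.I / p) with hζdef
  have hpc : (p : ℂ) ≠ 0 := Nat.cast_ne_zero.mpr hp.ne_zero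
  have hζp : ζ ^ p = 1 := by
    rw [hζdef, ← Complex.exp_nat_mul]
    rw [show (p : ℂ) * (2 * Real.pi * Complex.I / p) = 2 * Real.pi * Complex.I by field_simp]
    exact Complex.exp_two_pi_mul_I
  have hζint : IsIntegral ℤ ζ :=
    ⟨Polynomial.X ^ p - Polynomial.C 1, Polynomial.monic_X_pow_sub_C 1 hp.ne_zero, by
      simp [hζp]⟩
  set R0 := Algebra.adjoin ℤ ({ζ} : Set ℂ) with hR0
  haveI : Module.Finite ℤ R0 := Module.Finite.iff_fg.mpr hζint.fg_adjoin_singleton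
  have hζmem : ζ ∈ R0 := Algebra.subset_adjoin (Set.mem_singleton ζ)
  have hpsi_mem : ∀ t : F, psiGF p F t ∈ R0 := by
    intro t
    have h1 : psiGF p F t = ζ ^ ((Algebra.trace (ZMod p) F t).val) := by
      rw [psiGF, hζdef, ← Complex.exp_nat_mul]
      congr 1
      ring
    rw [h1]
    exact pow_mem hζmem _
  have hmem : ∀ a b : Fin m → F, tmatGF p F m a b ∈ R0 := by
    intro a b
    unfold tmatGF
    rw [Matrix.of_apply]
    split
    · exact hpsi_mem _
    · exact zero_mem _
  set M0 : Matrix (Fin m → F) (Fin m → F) R0 :=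
    Matrix.of (fun a b => (⟨tmatGF p F m a b, hmem a b⟩ : R0)) with hM0
  haveI : Module.Finite ℤ (Matrix (Fin m → F) (Fin m → F) R0) :=
    inferInstanceAs (Module.Finite ℤ ((Fin m → F) → (Fin m → F) → R0))
  obtain ⟨q, hqmonic, hq0⟩ := IsIntegral.of_finite ℤ M0
  have hq0a : Polynomial.aeval M0 q = 0 := by rw [Polynomial.aeval_def]; exact hq0
  set d := q.natDegree with hddef
  have hmap : ((AlgHom.mapMatrix (R0.val) :
      Matrix (Fin m → F) (Fin m → F) R0 →ₐ[ℤ] Matrix (Fin m → F) (Fin m → F) ℂ) M0)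
        = tmatGF p F m := by
    ext a b
    simp [hM0]
  have hq0' : Polynomial.aeval (tmatGF p F m) q = 0 := by
    rw [← hmap]
    rw [Polynomial.aeval_algHom_apply (AlgHom.mapMatrix (R0.val)) M0 q]
    rw [hq0a]
    simp
  haveI : Nonempty (Fin m → F) := ⟨fun _ => 0⟩
  have hd1 : 1 ≤ d := by
    by_contra h
    have hq1 : q = 1 := (hqmonic.natDegree_eq_zero).mp (by omega)
    rw [hq1] at hq0'
    simp only [map_one] at hq0'
    have h2 := congrFun (congrFun (congrArg (fun M => (M : Matrix (Fin m → F) (Fin m → F) ℂ)) hq0')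
      Classical.ofNonempty) Classical.ofNonempty
    simp [Matrix.one_apply] at h2
  set cc : ℕ → ℤ := fun i => -(q.coeff i) with hcc
  have hMd : tmatGF p F m ^ d = ∑ i ∈ Finset.range d, cc i • tmatGF p F m ^ i := by
    have h1 := Polynomial.aeval_eq_sum_range (R := ℤ) (p := q) (tmatGF p F m)
    rw [hq0', Finset.sum_range_succ, ← hddef, hqmonic.coeff_natDegree, one_smul] at h1
    have h2 : tmatGF p F m ^ d = -∑ i ∈ Finset.range d, q.coeff i • tmatGF p F m ^ i := by
      rw [eq_neg_iff_add_eq_zero, add_comm]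
      exact h1.symm
    rw [h2, ← Finset.sum_neg_distrib]
    exact Finset.sum_congr rfl fun i _ => (neg_smul _ _).symm
  have hMn : ∀ n : ℕ, d ≤ n →
      tmatGF p F m ^ n = ∑ i ∈ Finset.range d, cc i • tmatGF p F m ^ (n - d + i) := by
    intro n hn
    have h3 : tmatGF p F m ^ n = tmatGF p F m ^ (n - d) * tmatGF p F m ^ d := by
      rw [← pow_add]
      congr 1
      omega
    rw [h3, hMd, Finset.mul_sum]
    refine Finset.sum_congr rfl fun i _ => ?_
    rw [mul_smul_comm, ← pow_add]
  refine ⟨d, hd1, cc, fun n hn => ?_⟩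
  rw [hk1]
  rw [← trace_tmatGF p F m n hm (by omega)]
  rw [hMn n (by omega)]
  rw [Matrix.trace_sum]
  refine Finset.sum_congr rfl fun i hi => ?_
  rw [Matrix.trace_smul, trace_tmatGF p F m (n - d + i) hm (by omega), zsmul_eq_mul]
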